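/- With ρ(u) = θ(θ+1)(1-u)^{θ-1} (θ > 0), κ_{m,r}(ρ) = ∫₀¹ u^m (1-u)^r ρ(u) du, and φ(n) = (θ+1)n/(θ+n), the EPPF ∑ over all orderings (m₁,…,m_K) in the symmetric group of (e₁,…,e_K) of ∏_{j=1}^K κ_{m_j,r_{j-1}}(ρ)/∏_{j=1}^K φ(r_j) equals the Ewens sampling formula EPPF θ^K Γ(θ)/Γ(θ+n) · ∏_{j=1}^K Γ(e_j), where n = e₁+⋯+e_K. -/

import Mathlib

/-!
Each `κ_{m,r}` is a Beta integral, `θ(θ+1) B(m+1, θ+r)`, and `Γ(θ+r+m+1) = (θ+r+m) Γ(θ+r+m)`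
cancels `φ(r+m)` up to `θ Γ(m+1)/(r+m) · Γ(θ+r)/Γ(θ+r+m)`. Along an ordering the Gamma ratios
telescope to `Γ(θ)/Γ(θ+n)`, so every summand is `θ^K Γ(θ)/Γ(θ+n) ∏ Γ(e_j+1)` divided by the
product of the partial sums `r_j`. What remains is the identity
`∑_σ ∏_j 1/(x_{σ 1} + ⋯ + x_{σ j}) = 1/∏_j x_j`: for suffix sums the first factor is always
`1/∑ x`, and fixing the first element of `σ` reduces to `K - 1` elements; reversing the order
turns suffix sums into prefix sums. Finally `Γ(e+1) = e Γ(e)`.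
-/

open MeasureTheory Real Set Finset

theorem integral_Ioo_rpow_mul_one_sub_rpow {a b : ℝ} (ha : 0 < a) (hb : 0 < b) :
    ∫ x in Ioo (0 : ℝ) 1, x ^ (a - 1) * (1 - x) ^ (b - 1) = ProbabilityTheory.beta a b := by
  have hC : Complex.betaIntegral a b
      = ↑(∫ x in Ioo (0 : ℝ) 1, x ^ (a - 1) * (1 - x) ^ (b - 1)) := by
    rw [Complex.betaIntegral, intervalIntegral.integral_of_le zero_le_one,
      integral_Ioc_eq_integral_Ioo, ← integral_complex_ofReal]
    refine setIntegral_congr_fun measurableSet_Ioo fun x hx => ?_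
    push_cast [Complex.ofReal_cpow hx.1.le, Complex.ofReal_cpow (sub_nonneg.2 hx.2.le)]
    rfl
  rw [ProbabilityTheory.beta_eq_betaIntegralReal a b ha hb, hC, Complex.ofReal_re]

noncomputable def ewensKappa (θ : ℝ) (m r : ℕ) : ℝ :=
  θ * (θ + 1) * ProbabilityTheory.beta (m + 1) (θ + r)

noncomputable def ewensPhi (θ : ℝ) (n : ℕ) : ℝ :=
  (θ + 1) * n / (θ + n)

theorem setIntegral_pow_mul_one_sub_pow_mul_eq_ewensKappa {θ : ℝ} (hθ : 0 < θ) {ρ : ℝ → ℝ}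
    (hρ : ∀ u ∈ Ioo (0 : ℝ) 1, ρ u = θ * (θ + 1) * (1 - u) ^ (θ - 1)) (m r : ℕ) :
    ∫ u in Ioo (0 : ℝ) 1, u ^ m * (1 - u) ^ r * ρ u = ewensKappa θ m r := by
  rw [ewensKappa, ← integral_Ioo_rpow_mul_one_sub_rpow (by positivity) (by positivity),
    ← integral_const_mul]
  refine setIntegral_congr_fun measurableSet_Ioo fun u hu => ?_
  rw [hρ u hu, add_sub_cancel_right, rpow_natCast, show θ + (r : ℝ) - 1 = r + (θ - 1) by ring,
    rpow_add (sub_pos.2 hu.2), rpow_natCast]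
  ring

theorem ewensKappa_div_ewensPhi {θ : ℝ} (hθ : 0 < θ) (m r : ℕ) :
    ewensKappa θ m r / ewensPhi θ (r + m)
      = θ * Gamma (m + 1) * ((r + m : ℕ) : ℝ)⁻¹ * (Gamma (θ + r) / Gamma (θ + ↑(r + m))) := by
  rcases Nat.eq_zero_or_pos (r + m) with h | h
  · -- both sides are junk zeros: `ewensPhi θ 0 = 0` and `x / 0 = 0`
    simp [ewensPhi, h]
  have hΓ : Gamma (m + 1 + (θ + r)) = (θ + ↑(r + m)) * Gamma (θ + ↑(r + m)) := by
    rw [← Gamma_add_one (by positivity)]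
    push_cast
    ring_nf
  have hrm : (0 : ℝ) < ↑(r + m) := by exact_mod_cast h
  have hΓne : Gamma (θ + ↑(r + m)) ≠ 0 := (Gamma_pos_of_pos (by positivity)).ne'
  rw [ewensKappa, ewensPhi, ProbabilityTheory.beta, hΓ]
  field_simp

theorem prod_div_sum_Iio_sum_Iic {G : Type*} [CommGroupWithZero G] (g : ℕ → G)
    (hg : ∀ k, g k ≠ 0) :
    ∀ {K : ℕ} (m : Fin K → ℕ), ∏ j, g (∑ i < j, m i) / g (∑ i ≤ j, m i) = g 0 / g (∑ i, m i)
  | 0, m => by simp [div_self (hg 0)]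
  | K + 1, m => by
    rw [Fin.prod_univ_castSucc, Fin.sum_univ_castSucc, ← sum_Iio_add_eq_sum_Iic,
      Fin.Iio_last_eq_map, sum_map]
    simp only [Fin.sum_Iio_castSucc, Fin.sum_Iic_castSucc, prod_div_sum_Iio_sum_Iic g hg]
    exact div_mul_div_cancel₀ (hg _)

theorem prod_ewensKappa_div_prod_ewensPhi {θ : ℝ} (hθ : 0 < θ) {K : ℕ} (m : Fin K → ℕ) :
    (∏ j, ewensKappa θ (m j) (∑ i < j, m i)) / ∏ j, ewensPhi θ (∑ i ≤ j, m i)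
      = θ ^ K * Gamma θ / Gamma (θ + ↑(∑ i, m i)) * (∏ j, Gamma (m j + 1))
          * ∏ j, ((∑ i ≤ j, m i : ℕ) : ℝ)⁻¹ := by
  have hterm : ∀ j, ewensKappa θ (m j) (∑ i < j, m i) / ewensPhi θ (∑ i ≤ j, m i)
      = θ * Gamma (m j + 1) * ((∑ i ≤ j, m i : ℕ) : ℝ)⁻¹
        * (Gamma (θ + ↑(∑ i < j, m i)) / Gamma (θ + ↑(∑ i ≤ j, m i))) := fun j => by
    rw [← sum_Iio_add_eq_sum_Iic]
    exact ewensKappa_div_ewensPhi hθ _ _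
  have htele := prod_div_sum_Iio_sum_Iic (fun k => Gamma (θ + k))
    (fun k => (Gamma_pos_of_pos (by positivity)).ne') m
  rw [← prod_div_distrib, prod_congr rfl fun j _ => hterm j, prod_mul_distrib, prod_mul_distrib,
    prod_mul_distrib, prod_const, card_univ, Fintype.card_fin, htele, Nat.cast_zero, add_zero]
  ring

section PartialSums

variable {𝕜 : Type*} [Field 𝕜] [LinearOrder 𝕜] [IsStrictOrderedRing 𝕜]

theorem sum_perm_prod_inv_sum_Ici :
    ∀ {K : ℕ} (x : Fin K → 𝕜), (∀ j, 0 < x j) →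
      ∑ σ : Equiv.Perm (Fin K), ∏ j, (∑ i ≥ j, x (σ i))⁻¹ = (∏ j, x j)⁻¹
  | 0, x, _ => by simp
  | K + 1, x, hx => by
    have hfirst : ∀ (p : Fin (K + 1)) (τ : Equiv.Perm (Fin K)),
        ∏ j, (∑ i ≥ j, x (Equiv.Perm.decomposeFin.symm (p, τ) i))⁻¹
          = (∑ i, x i)⁻¹ * ∏ j, (∑ i ≥ j, x (Equiv.swap 0 p (τ i).succ))⁻¹ := by
      intro p τ
      simp only [Fin.prod_univ_succ, Fin.sum_Ici_succ, Equiv.Perm.decomposeFin_symm_apply_succ]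
      rw [← bot_eq_zero, Finset.Ici_bot, Equiv.sum_comp]
    have hrest : ∀ p, ∑ τ : Equiv.Perm (Fin K), ∏ j, (∑ i ≥ j, x (Equiv.swap 0 p (τ i).succ))⁻¹
        = x p / ∏ i, x i := by
      intro p
      rw [sum_perm_prod_inv_sum_Ici (fun i => x (Equiv.swap 0 p i.succ)) (fun _ => hx _),
        ← inv_div, ← Equiv.prod_comp (Equiv.swap 0 p) x, Fin.prod_univ_succ, Equiv.swap_apply_left,
        mul_div_cancel_left₀ _ (hx p).ne']
    have hsum : (∑ i, x i) ≠ 0 := (sum_pos (fun i _ => hx i) univ_nonempty).ne'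
    rw [← Equiv.sum_comp Equiv.Perm.decomposeFin.symm, Fintype.sum_prod_type]
    simp only [hfirst, ← mul_sum, hrest, ← sum_div]
    rw [mul_div_assoc', inv_mul_cancel₀ hsum, one_div]

theorem sum_perm_prod_inv_sum_Iic {K : ℕ} (x : Fin K → 𝕜) (hx : ∀ j, 0 < x j) :
    ∑ σ : Equiv.Perm (Fin K), ∏ j, (∑ i ≤ j, x (σ i))⁻¹ = (∏ j, x j)⁻¹ := by
  rw [← sum_perm_prod_inv_sum_Ici x hx, ← Equiv.sum_comp (Equiv.mulRight Fin.revPerm)]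
  refine sum_congr rfl fun σ _ => ?_
  rw [← Equiv.prod_comp Fin.revPerm]
  refine prod_congr rfl fun j _ => ?_
  rw [Fin.revPerm_apply, ← Fin.map_revPerm_Ici, sum_map]
  simp

end PartialSums

theorem ordered_ESF_eppf_is_ewens_general
    (θ : ℝ) (hθ : 0 < θ)
    (ρ : ℝ → ℝ) (hρ : ∀ u ∈ Ioo (0:ℝ) 1, ρ u = θ * (θ + 1) * (1 - u) ^ (θ - 1))
    (κ : ℕ → ℕ → ℝ)
    (hκ : ∀ m r : ℕ, κ m r = ∫ u in Ioo (0:ℝ) 1, u ^ m * (1 - u) ^ r * ρ u)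
    (φ : ℕ → ℝ) (hφ : ∀ n : ℕ, φ n = (θ + 1) * n / (θ + n))
    (K : ℕ) (e : Fin K → ℕ) (he : ∀ j, 1 ≤ e j)
    (n : ℕ) (hn : n = ∑ j, e j) :
    ∑ σ : Equiv.Perm (Fin K),
        (∏ j : Fin K, κ (e (σ j)) (∑ i ∈ Finset.univ.filter (fun i => i < j), e (σ i)))
          / (∏ j : Fin K, φ (∑ i ∈ Finset.univ.filter (fun i => i ≤ j), e (σ i)))
      = θ ^ K * Real.Gamma θ / Real.Gamma (θ + n) * ∏ j : Fin K, Real.Gamma (e j) := by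
  obtain rfl : κ = ewensKappa θ := funext₂ fun m r =>
    (hκ m r).trans (setIntegral_pow_mul_one_sub_pow_mul_eq_ewensKappa hθ hρ m r)
  obtain rfl : φ = ewensPhi θ := funext hφ
  subst hn
  have he' : ∀ j, (0 : ℝ) < e j := fun j => by exact_mod_cast he j
  simp only [filter_gt_eq_Iio, filter_ge_eq_Iic, prod_ewensKappa_div_prod_ewensPhi hθ,
    Equiv.sum_comp, Equiv.prod_comp _ fun j => Gamma (e j + 1), ← mul_sum]
  push_cast
  rw [sum_perm_prod_inv_sum_Iic _ he', prod_congr rfl fun j _ => Gamma_add_one (he' j).ne',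
    prod_mul_distrib]
  have hprod : ∏ j, (e j : ℝ) ≠ 0 := prod_ne_zero_iff.2 fun j _ => (he' j).ne'
  field_simp

theorem ordered_ESF_eppf_is_ewens
    (θ : ℝ) (hθ : 0 < θ)
    (ρ : ℝ → ℝ) (hρ : ∀ u ∈ Ioo (0:ℝ) 1, ρ u = θ * (θ + 1) * (1 - u) ^ (θ - 1))
    (κ : ℕ → ℕ → ℝ)
    (hκ : ∀ m r : ℕ, κ m r = ∫ u in Ioo (0:ℝ) 1, u ^ m * (1 - u) ^ r * ρ u)
    (φ : ℕ → ℝ) (hφ : ∀ n : ℕ, φ n = (θ + 1) * n / (θ + n))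
    (K : ℕ) (hK : 0 < K) (e : Fin K → ℕ) (he : ∀ j, 1 ≤ e j)
    (n : ℕ) (hn : n = ∑ j, e j) :
    ∑ σ : Equiv.Perm (Fin K),
        (∏ j : Fin K, κ (e (σ j)) (∑ i ∈ Finset.univ.filter (fun i => i < j), e (σ i)))
          / (∏ j : Fin K, φ (∑ i ∈ Finset.univ.filter (fun i => i ≤ j), e (σ i)))
      = θ ^ K * Real.Gamma θ / Real.Gamma (θ + n) * ∏ j : Fin K, Real.Gamma (e j) :=
  ordered_ESF_eppf_is_ewens_general θ hθ ρ hρ κ hκ φ hφ K e he n hn
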